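/- (Theorem 3.4, a priori estimate.) Under the Hilbert propagator setup and the Hilbert solution setup, assume u₀ ≠ 0, let κ > 0, define ζ(t) := ‖U(t)‖·‖u₀‖ + ‖U(t)‖·∫₀ᵗ ‖V(ξ)‖·β(ξ) dξ, and assume α(t)·((κ+1)·ζ(t))^p ≤ κ·β(t) for all t ≥ 0. Then ‖u(t)‖ < (κ+1)·ζ(t) for all t ∈ [0,T). -/

import Mathlib

/-!
Suppose the bound fails and let t₁ be the first time with ‖u t₁‖ ≥ (κ + 1) ζ t₁. Before t₁ the
bound holds, so the hypothesis on α turns ‖G‖ ≤ α ‖u‖ ^ p into ‖G‖ ≤ κ β. The conjugated solution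
y = V u no longer sees B: y' = V (w + G + f). Since w is dissipative for y, this gives
(d/dt) ‖y‖ ≤ (κ + 1) ‖V‖ β, hence ‖V t₁ (u t₁)‖ ≤ ‖u₀‖ + (κ + 1) ∫₀^t₁ ‖V‖ β. Applying U t₁
yields ‖u t₁‖ ≤ (κ + 1) ζ t₁ - κ ‖U t₁‖ ‖u₀‖ < (κ + 1) ζ t₁, a contradiction.
-/

open MeasureTheory Filter Set RCLike
open scoped ENNReal InnerProductSpace

theorem lt_of_forall_lt_on_Ico_imp_lt {f g : ℝ → ℝ} {a b : ℝ} (hab : a ≤ b)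
    (hf : ContinuousOn f (Icc a b)) (hg : ContinuousOn g (Icc a b))
    (hstep : ∀ c ∈ Icc a b, (∀ s ∈ Ico a c, f s < g s) → f c < g c) : f b < g b := by
  by_contra! hb
  set S := {s ∈ Icc a b | g s ≤ f s}
  have hSbdd : BddBelow S := ⟨a, fun s hs => hs.1.1⟩
  have hcS : sInf S ∈ S :=
    (isClosed_Icc.isClosed_le hg hf).csInf_mem ⟨b, right_mem_Icc.2 hab, hb⟩ hSbdd
  refine hcS.2.not_gt (hstep _ hcS.1 fun s hs => lt_of_not_ge fun hgf => ?_)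
  exact hs.2.not_ge (csInf_le hSbdd ⟨⟨hs.1, hs.2.le.trans hcS.1.2⟩, hgf⟩)

theorem continuousOn_norm_mul_add_norm_mul_integral {F : Type*} [SeminormedAddCommGroup F]
    {U : ℝ → F} {g : ℝ → ℝ} {c a b : ℝ} (hab : a ≤ b) (hU : ContinuousOn U (Icc a b))
    (hg : ContinuousOn g (Icc a b)) :
    ContinuousOn (fun t => ‖U t‖ * c + ‖U t‖ * ∫ ξ in a..t, g ξ) (Icc a b) := by
  have hI := intervalIntegral.continuousOn_primitive_interval (μ := volume)
    (uIcc_of_le hab ▸ hg.integrableOn_Icc)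
  rw [uIcc_of_le hab] at hI
  exact (hU.norm.mul continuousOn_const).add (hU.norm.mul hI)

section OperatorNorm

variable {𝕜 E F : Type*} [NontriviallyNormedField 𝕜] [SeminormedAddCommGroup F] [NormedSpace 𝕜 F]

theorem ContinuousLinearMap.norm_le_opNorm_mul_of_comp_eq_id [SeminormedAddCommGroup E]
    [NormedSpace 𝕜 E] {U : F →L[𝕜] E} {V : E →L[𝕜] F}
    (h : U.comp V = ContinuousLinearMap.id 𝕜 E) (x : E) : ‖x‖ ≤ ‖U‖ * ‖V x‖ :=
  calc ‖x‖ = ‖U (V x)‖ := by rw [← comp_apply, h, id_apply]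
    _ ≤ ‖U‖ * ‖V x‖ := U.le_opNorm _

theorem ContinuousLinearMap.norm_lt_of_norm_apply_le [NormedAddCommGroup E] [NormedSpace 𝕜 E]
    {U : F →L[𝕜] E} {V : E →L[𝕜] F} (h : U.comp V = ContinuousLinearMap.id 𝕜 E) {x x₀ : E}
    (hx₀ : x₀ ≠ 0) {I κ : ℝ} (hκ : 0 < κ) (hVx : ‖V x‖ ≤ ‖x₀‖ + (κ + 1) * I) :
    ‖x‖ < (κ + 1) * (‖U‖ * ‖x₀‖ + ‖U‖ * I) := by
  have hx₀' : 0 < ‖x₀‖ := norm_pos_iff.2 hx₀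
  have hU : 0 < ‖U‖ := by
    nlinarith [U.norm_le_opNorm_mul_of_comp_eq_id h x₀, norm_nonneg (V x₀), norm_nonneg U]
  calc ‖x‖ ≤ ‖U‖ * ‖V x‖ := U.norm_le_opNorm_mul_of_comp_eq_id h x
    _ ≤ ‖U‖ * (‖x₀‖ + (κ + 1) * I) := by gcongr
    _ < (κ + 1) * (‖U‖ * ‖x₀‖ + ‖U‖ * I) := by nlinarith [mul_pos hκ (mul_pos hU hx₀')]

end OperatorNorm

theorem HasDerivAt.clm_apply_of_hasDerivAt_neg_comp {𝕜 E : Type*} [RCLike 𝕜]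
    [NormedAddCommGroup E] [NormedSpace 𝕜 E] [NormedSpace ℝ E] [IsScalarTower ℝ 𝕜 E]
    {V : ℝ → E →L[𝕜] E} {u : ℝ → E} {A : E →L[𝕜] E} {r : E} {x : ℝ}
    (hV : HasDerivAt V (-((V x).comp A)) x) (hu : HasDerivAt u (A (u x) + r) x) :
    HasDerivAt (fun s => V s (u s)) (V x r) x := by
  have hVℝ : HasDerivAt (fun s => (V s).restrictScalars ℝ)
      ((-((V x).comp A)).restrictScalars ℝ) x :=
    (ContinuousLinearMap.restrictScalarsL 𝕜 E E ℝ ℝ).hasFDerivAt.comp_hasDerivAt x hV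
  refine (hVℝ.clm_apply hu).congr_deriv ?_
  change -V x (A (u x)) + V x (A (u x) + r) = V x r
  rw [map_add, neg_add_cancel_left]

section InnerProduct

variable {𝕜 E : Type*} [RCLike 𝕜] [NormedAddCommGroup E] [InnerProductSpace 𝕜 E]

theorem re_inner_add_le_of_re_inner_nonpos {a b z : E} (ha : re ⟪a, z⟫_𝕜 ≤ 0) :
    re ⟪a + b, z⟫_𝕜 ≤ ‖b‖ * ‖z‖ := by
  rw [inner_add_left, map_add]
  linarith [re_inner_le_norm (𝕜 := 𝕜) b z]

variable [NormedSpace ℝ E]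

theorem HasDerivAt.norm_mul_eq_re_inner {y : ℝ → E} {y' : E} {d x : ℝ}
    (hy : HasDerivAt y y' x) (hn : HasDerivAt (‖y ·‖) d x) :
    ‖y x‖ * d = re ⟪y', y x⟫_𝕜 := by
  have hsq : HasDerivAt (fun s => re ⟪y s, y s⟫_𝕜) (re (⟪y x, y'⟫_𝕜 + ⟪y', y x⟫_𝕜)) x :=
    (reCLM (K := 𝕜)).hasFDerivAt.comp_hasDerivAt x (hy.inner 𝕜 hy)
  simp only [inner_self_eq_norm_sq, map_add, inner_re_symm] at hsq
  have := (hn.pow 2).unique hsq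
  push_cast at this
  linarith

theorem deriv_norm_le_of_re_inner_le {y : ℝ → E} {y' : E} {x c : ℝ}
    (hy : HasDerivAt y y' x) (hn : DifferentiableAt ℝ (‖y ·‖) x) (hc : 0 ≤ c)
    (hbound : re ⟪y', y x⟫_𝕜 ≤ c * ‖y x‖) : deriv (‖y ·‖) x ≤ c := by
  rcases (norm_nonneg (y x)).eq_or_lt with hzero | hpos
  · have hmin : IsLocalMin (‖y ·‖) x :=
      Eventually.of_forall fun s => (hzero ▸ norm_nonneg (y s) : ‖y x‖ ≤ ‖y s‖)
    rw [hmin.deriv_eq_zero]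
    exact hc
  · refine le_of_mul_le_mul_left ?_ hpos
    rw [hy.norm_mul_eq_re_inner (𝕜 := 𝕜) hn.hasDerivAt, mul_comm]
    exact hbound

theorem norm_sub_norm_le_integral_of_re_inner_le {y y' : ℝ → E} {m : ℝ → ℝ} {a b : ℝ}
    (hab : a ≤ b) (hy : ∀ x ∈ Ioo a b, HasDerivAt y (y' x) x)
    (hn : ∀ x ∈ Icc a b, DifferentiableAt ℝ (‖y ·‖) x) (hm : IntegrableOn m (Icc a b))
    (hm0 : ∀ x ∈ Ioo a b, 0 ≤ m x) (hbound : ∀ x ∈ Ioo a b, re ⟪y' x, y x⟫_𝕜 ≤ m x * ‖y x‖) :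
    ‖y b‖ - ‖y a‖ ≤ ∫ x in a..b, m x :=
  intervalIntegral.sub_le_integral_of_hasDeriv_right_of_le hab
    (fun x hx => (hn x hx).continuousAt.continuousWithinAt)
    (fun x hx => (hn x (Ioo_subset_Icc_self hx)).hasDerivAt.hasDerivWithinAt) hm
    fun x hx => deriv_norm_le_of_re_inner_le (hy x hx) (hn x (Ioo_subset_Icc_self hx)) (hm0 x hx)
      (hbound x hx)

theorem norm_propagator_apply_le [IsScalarTower ℝ 𝕜 E] {A V : ℝ → E →L[𝕜] E} {u r d : ℝ → E}
    {b : ℝ → ℝ} {a t : ℝ} (hat : a ≤ t)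
    (hV : ∀ s ∈ Ioo a t, HasDerivAt V (-((V s).comp (A s))) s)
    (hu : ∀ s ∈ Ioo a t, HasDerivAt u (A s (u s) + (r s + d s)) s)
    (hn : ∀ s ∈ Icc a t, DifferentiableAt ℝ (fun s => ‖V s (u s)‖) s)
    (hr : ∀ s ∈ Ioo a t, re ⟪V s (r s), V s (u s)⟫_𝕜 ≤ 0)
    (hd : ∀ s ∈ Ioo a t, ‖d s‖ ≤ b s) (hb : IntegrableOn (fun s => ‖V s‖ * b s) (Icc a t)) :
    ‖V t (u t)‖ ≤ ‖V a (u a)‖ + ∫ s in a..t, ‖V s‖ * b s := by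
  have := norm_sub_norm_le_integral_of_re_inner_le (𝕜 := 𝕜) hat
    (fun s hs => (hV s hs).clm_apply_of_hasDerivAt_neg_comp (hu s hs)) hn hb
    (fun s hs => mul_nonneg (norm_nonneg _) ((norm_nonneg _).trans (hd s hs)))
    fun s hs => by
      rw [map_add]
      refine (re_inner_add_le_of_re_inner_nonpos (hr s hs)).trans ?_
      gcongr
      exact (V s).le_opNorm_of_le (hd s hs)
  linarith

end InnerProduct

theorem stmt14_general
    {H : Type*} [NormedAddCommGroup H] [InnerProductSpace ℂ H]
    (B U V : ℝ → H →L[ℂ] H)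
    (hV0 : V 0 = 1)
    (hUV : ∀ t, 0 ≤ t → (U t).comp (V t) = 1)
    (hUd : ∀ t, 0 ≤ t → HasDerivAt U ((B t).comp (U t)) t)
    (hVd : ∀ t, 0 ≤ t → HasDerivAt V (-((V t).comp (B t))) t)
    (p : ℝ) (hp : 1 < p)
    (α β : ℝ → ℝ) (hβc : Continuous β)
    (hα0 : ∀ t, 0 ≤ α t)
    (T : ℝ≥0∞)
    (u w G f : ℝ → H) (u₀ : H) (hu0 : u 0 = u₀)
    (hud : ∀ t, 0 ≤ t → ENNReal.ofReal t < T →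
      HasDerivAt u (B t (u t) + w t + G t + f t) t)
    (hw : ∀ t, 0 ≤ t → ENNReal.ofReal t < T →
      (inner ℂ (V t (w t)) (V t (u t)) : ℂ).re ≤ 0)
    (hGb : ∀ t, 0 ≤ t → ENNReal.ofReal t < T → ‖G t‖ ≤ α t * ‖u t‖ ^ p)
    (hfb : ∀ t, 0 ≤ t → ENNReal.ofReal t < T → ‖f t‖ ≤ β t)
    (hVud : ∀ t, 0 ≤ t → ENNReal.ofReal t < T →
      DifferentiableAt ℝ (fun s => ‖V s (u s)‖) t)
    (hu₀ : u₀ ≠ 0) (κ : ℝ) (hκ : 0 < κ)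
    (ζ : ℝ → ℝ)
    (hζ : ∀ t, ζ t = ‖U t‖ * ‖u₀‖ + ‖U t‖ * ∫ ξ in (0:ℝ)..t, ‖V ξ‖ * β ξ)
    (hκβ : ∀ t, 0 ≤ t → α t * ((κ + 1) * ζ t) ^ p ≤ κ * β t) :
    ∀ t, 0 ≤ t → ENNReal.ofReal t < T → ‖u t‖ < (κ + 1) * ζ t := by
  intro t ht htT
  have hdom : ∀ s ≤ t, ENNReal.ofReal s < T := fun s hs =>
    (ENNReal.ofReal_le_ofReal hs).trans_lt htT
  have hζc : ContinuousOn ζ (Icc 0 t) := funext hζ ▸ continuousOn_norm_mul_add_norm_mul_integral ht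
    (fun s hs => (hUd s hs.1).continuousAt.continuousWithinAt)
    fun s hs => ((hVd s hs.1).continuousAt.norm.mul hβc.continuousAt).continuousWithinAt
  have huc : ContinuousOn u (Icc 0 t) := fun s hs =>
    (hud s hs.1 (hdom s hs.2)).continuousAt.continuousWithinAt
  refine lt_of_forall_lt_on_Ico_imp_lt (g := fun s => (κ + 1) * ζ s) ht huc.norm
    (continuousOn_const.mul hζc) fun t₁ ht₁ hbefore => ?_
  have hdom₁ : ∀ s ≤ t₁, ENNReal.ofReal s < T := fun s hs => hdom s (hs.trans ht₁.2)
  have hGf : ∀ s ∈ Ioo 0 t₁, ‖G s + f s‖ ≤ (κ + 1) * β s := fun s hs => by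
    have hus : ‖u s‖ ^ p ≤ ((κ + 1) * ζ s) ^ p := by
      gcongr
      exact (hbefore s (Ioo_subset_Ico_self hs)).le
    linarith [norm_add_le (G s) (f s), hGb s hs.1.le (hdom₁ s hs.2.le),
      hfb s hs.1.le (hdom₁ s hs.2.le), hκβ s hs.1.le, mul_le_mul_of_nonneg_left hus (hα0 s)]
  have hVβ : IntegrableOn (fun s => ‖V s‖ * ((κ + 1) * β s)) (Icc 0 t₁) :=
    ContinuousOn.integrableOn_Icc fun s hs => ContinuousAt.continuousWithinAt <|
      (hVd s hs.1).continuousAt.norm.mul (continuousAt_const.mul hβc.continuousAt)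
  have henergy := norm_propagator_apply_le ht₁.1 (fun s hs => hVd s hs.1.le)
    (fun s hs => by simpa only [add_assoc] using hud s hs.1.le (hdom₁ s hs.2.le))
    (fun s hs => hVud s hs.1 (hdom₁ s hs.2)) (fun s hs => hw s hs.1.le (hdom₁ s hs.2.le)) hGf hVβ
  simp only [mul_left_comm ‖V _‖, intervalIntegral.integral_const_mul, hV0, hu0,
    one_apply_eq_self] at henergy
  rw [hζ]
  exact (U t₁).norm_lt_of_norm_apply_le (hUV t₁ ht₁.1) hu₀ hκ henergy

theorem stmt14
    {H : Type*} [NormedAddCommGroup H] [InnerProductSpace ℂ H] [CompleteSpace H]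
    (B U V : ℝ → H →L[ℂ] H)
    (hB : Continuous B)
    (hU0 : U 0 = 1) (hV0 : V 0 = 1)
    (hVU : ∀ t, 0 ≤ t → (V t).comp (U t) = 1)
    (hUV : ∀ t, 0 ≤ t → (U t).comp (V t) = 1)
    (hUd : ∀ t, 0 ≤ t → HasDerivAt U ((B t).comp (U t)) t)
    (hVd : ∀ t, 0 ≤ t → HasDerivAt V (-((V t).comp (B t))) t)
    (p : ℝ) (hp : 1 < p)
    (α β : ℝ → ℝ) (hαc : Continuous α) (hβc : Continuous β)
    (hα0 : ∀ t, 0 ≤ α t) (hβ0 : ∀ t, 0 ≤ β t)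
    (T : ℝ≥0∞) (hT : 0 < T)
    (u w G f : ℝ → H) (u₀ : H) (hu0 : u 0 = u₀)
    (hwc : ContinuousOn w {t : ℝ | 0 ≤ t ∧ ENNReal.ofReal t < T})
    (hGc : ContinuousOn G {t : ℝ | 0 ≤ t ∧ ENNReal.ofReal t < T})
    (hfc : ContinuousOn f {t : ℝ | 0 ≤ t ∧ ENNReal.ofReal t < T})
    (hud : ∀ t, 0 ≤ t → ENNReal.ofReal t < T →
      HasDerivAt u (B t (u t) + w t + G t + f t) t)
    (hw : ∀ t, 0 ≤ t → ENNReal.ofReal t < T →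
      (inner ℂ (V t (w t)) (V t (u t)) : ℂ).re ≤ 0)
    (hGb : ∀ t, 0 ≤ t → ENNReal.ofReal t < T → ‖G t‖ ≤ α t * ‖u t‖ ^ p)
    (hfb : ∀ t, 0 ≤ t → ENNReal.ofReal t < T → ‖f t‖ ≤ β t)
    (hVud : ∀ t, 0 ≤ t → ENNReal.ofReal t < T →
      DifferentiableAt ℝ (fun s => ‖V s (u s)‖) t)
    (hu₀ : u₀ ≠ 0) (κ : ℝ) (hκ : 0 < κ)
    (ζ : ℝ → ℝ)
    (hζ : ∀ t, ζ t = ‖U t‖ * ‖u₀‖ + ‖U t‖ * ∫ ξ in (0:ℝ)..t, ‖V ξ‖ * β ξ)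
    (hκβ : ∀ t, 0 ≤ t → α t * ((κ + 1) * ζ t) ^ p ≤ κ * β t) :
    ∀ t, 0 ≤ t → ENNReal.ofReal t < T → ‖u t‖ < (κ + 1) * ζ t :=
  stmt14_general B U V hV0 hUV hUd hVd p hp α β hβc hα0 T u w G f u₀ hu0 hud hw hGb hfb hVud hu₀ κ
    hκ ζ hζ hκβ
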